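/- If a choice correspondence c : 𝒜 → 𝒜 satisfies Reference Dependence, then there do not exist choice problems A, B₁, B₂ ∈ 𝒜 with B₁ ⊆ A, B₂ ⊆ A and B₁ ∪ B₂ = A such that WARP is violated both between A and B₁ and between A and B₂, i.e. such that for each i ∈ {1,2}: c(A) ∩ B_i ≠ ∅ and c(A) ∩ B_i ≠ c(B_i). -/
import Mathlib


/-- `c` satisfies WARP over a collection `S` of choice problems. -/
def WARPover {Y : Type*} [DecidableEq Y] (c : Finset Y → Finset Y)
    (S : Set (Finset Y)) : Prop :=
  ∀ A ∈ S, ∀ B ∈ S, B ⊆ A → (c A ∩ B).Nonempty → c A ∩ B = c B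

/-- Reference Dependence: every choice problem contains an alternative whose
presence preserves WARP among subsets. -/
def RefDep {Y : Type*} [DecidableEq Y] (c : Finset Y → Finset Y) : Prop :=
  ∀ A : Finset Y, A.Nonempty →
    ∃ x ∈ A, WARPover c {B : Finset Y | B ⊆ A ∧ x ∈ B}

/-- under Reference Dependence, there is no choice problem `A` with
two subsets `B₁, B₂` covering `A` such that WARP is violated both between `A` and `B₁`
and between `A` and `B₂`. -/
theorem stmt19 {Y : Type*} [DecidableEq Y]
    (c : Finset Y → Finset Y)
    (hc : ∀ A : Finset Y, A.Nonempty → c A ⊆ A ∧ (c A).Nonempty)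
    (hrd : RefDep c) :
    ¬ ∃ A B₁ B₂ : Finset Y, A.Nonempty ∧ B₁.Nonempty ∧ B₂.Nonempty ∧
      B₁ ⊆ A ∧ B₂ ⊆ A ∧ B₁ ∪ B₂ = A ∧
      ((c A ∩ B₁).Nonempty ∧ c A ∩ B₁ ≠ c B₁) ∧
      ((c A ∩ B₂).Nonempty ∧ c A ∩ B₂ ≠ c B₂) := by
  rintro ⟨A, B₁, B₂, hA, hB₁, hB₂, h₁, h₂, hcov, ⟨hne₁, hneq₁⟩, ⟨hne₂, hneq₂⟩⟩
  obtain ⟨x, hxA, hwarp⟩ := hrd A hA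
  have hx : x ∈ B₁ ∨ x ∈ B₂ := by
    have := hcov ▸ hxA
    simpa [Finset.mem_union] using this
  rcases hx with hx | hx
  · exact hneq₁ (hwarp A ⟨le_refl A, hxA⟩ B₁ ⟨h₁, hx⟩ h₁ hne₁)
  · exact hneq₂ (hwarp A ⟨le_refl A, hxA⟩ B₂ ⟨h₂, hx⟩ h₂ hne₂)
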